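/- Let 𝒬 be a set of joint distribution matrices on a nonempty finite set S that is closed under transposition (Q ∈ 𝒬 implies Qᵀ ∈ 𝒬) and such that every Q ∈ 𝒬 has strictly positive row sums and strictly positive column sums. Fix N ≥ 2 and let 𝒟 be the set of all probability mass functions p on S^N of the form p(x₁,…,x_N) = (∏_{k=1}^{N-1} Q_k(x_k,x_{k+1})) / (∏_{k=2}^{N-1} q^{(k)}(x_k)), where Q_1,…,Q_{N-1} ∈ 𝒬 is a sequence with consecutive matrices marginally compatible and q^{(k)} is the row-sum vector of Q_k. Then 𝒟 is closed under path reversal: if p ∈ 𝒟 then p ∘ rev ∈ 𝒟, where rev(x₁,…,x_N) = (x_N,…,x₁). -/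
import Mathlib


/-- Entry of a finite path `x : Fin N → S` at a natural-number position. -/
def pathGet {S : Type*} {N : ℕ} (hN : 0 < N) (x : Fin N → S) (k : ℕ) : S :=
  x ⟨k % N, Nat.mod_lt k hN⟩

lemma pathGet_rev {S : Type*} {N : ℕ} (h0 : 0 < N) (x : Fin N → S) (m : ℕ) (hm : m < N) :
    pathGet h0 (fun i => x i.rev) m = pathGet h0 x (N - 1 - m) := by
  unfold pathGet
  exact congrArg x (Fin.ext (by
    simp only [Fin.val_rev]
    rw [Nat.mod_eq_of_lt hm, Nat.mod_eq_of_lt (by omega : N - 1 - m < N)]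
    omega))

/-- Let `Qset` be a set of joint distribution matrices on a nonempty
finite set `S`, closed under transposition and with strictly positive row and column
sums.  Fix `N ≥ 2` and let `D` be the set of probability mass functions on `S^N`
(paths `0`-indexed, so the `1`-indexed entry `x_k` is `pathGet _ x (k-1)`) of the form
`p x = (∏_{k=1}^{N-1} Qs k (x_k) (x_{k+1})) / (∏_{k=2}^{N-1} q^{(k)} (x_k))`,
for marginally compatible sequences `Qs 1, …, Qs (N-1) ∈ Qset`, where `q^{(k)}` is the
row-sum vector of `Qs k`.  Then `D` is closed under path reversal. -/
theorem joint_model_closed_under_reversal {S : Type*} [Fintype S] [Nonempty S]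
    (Qset : Set (S → S → ℝ))
    (hjd : ∀ Q ∈ Qset, (∀ x y, 0 ≤ Q x y) ∧ ∑ x, ∑ y, Q x y = 1)
    (htrans : ∀ Q ∈ Qset, (fun x y => Q y x) ∈ Qset)
    (hrow_pos : ∀ Q ∈ Qset, ∀ x, 0 < ∑ y, Q x y)
    (hcol_pos : ∀ Q ∈ Qset, ∀ y, 0 < ∑ x, Q x y)
    (N : ℕ) (hN : 2 ≤ N)
    (D : Set ((Fin N → S) → ℝ))
    (hD : ∀ p : (Fin N → S) → ℝ, p ∈ D ↔
      ((∀ x, 0 ≤ p x) ∧ (∑ x, p x = 1) ∧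
        ∃ Qs : ℕ → S → S → ℝ,
          (∀ k ∈ Finset.Icc 1 (N - 1), Qs k ∈ Qset) ∧
          (∀ k ∈ Finset.Icc 1 (N - 2), ∀ y, ∑ x, Qs k x y = ∑ z, Qs (k + 1) y z) ∧
          (∀ x : Fin N → S,
            p x = (∏ k ∈ Finset.Icc 1 (N - 1),
                    Qs k (pathGet (by omega) x (k - 1)) (pathGet (by omega) x k))
              / (∏ k ∈ Finset.Icc 2 (N - 1),
                    ∑ y, Qs k (pathGet (by omega) x (k - 1)) y)))) :
    ∀ p ∈ D, (fun x : Fin N → S => p (fun i => x i.rev)) ∈ D := by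

  intro p hp
  rw [hD] at hp ⊢
  obtain ⟨hpos, hsum, Qs, hmem, hcompat, hform⟩ := hp
  have hNpos : 0 < N := by omega
  have hrevinv : Function.Involutive (fun x : Fin N → S => fun i : Fin N => x i.rev) := by
    intro x; funext i; simp [Fin.rev_rev]
  refine ⟨fun x => hpos _, ?_, fun k a b => Qs (N - k) b a, ?_, ?_, ?_⟩
  · rw [← hsum]
    exact Fintype.sum_bijective _ hrevinv.bijective _ _ (fun x => rfl)
  · intro k hk
    simp only [Finset.mem_Icc] at hk
    exact htrans _ (hmem (N - k) (by simp only [Finset.mem_Icc]; omega))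
  · intro k hk y
    simp only [Finset.mem_Icc] at hk
    have h := hcompat (N - k - 1) (by simp only [Finset.mem_Icc]; omega) y
    rw [(by omega : N - k - 1 + 1 = N - k)] at h
    show (∑ x : S, Qs (N - k) y x) = ∑ z : S, Qs (N - (k + 1)) z y
    rw [(by omega : N - (k + 1) = N - k - 1)]
    exact h.symm
  · intro x
    rw [hform]
    have hnum : (∏ k ∈ Finset.Icc 1 (N - 1),
          Qs k (pathGet hNpos (fun i => x i.rev) (k - 1)) (pathGet hNpos (fun i => x i.rev) k))
        = ∏ k ∈ Finset.Icc 1 (N - 1),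
          Qs (N - k) (pathGet hNpos x k) (pathGet hNpos x (k - 1)) := by
      refine Finset.prod_nbij' (fun k => N - k) (fun k => N - k) ?_ ?_ ?_ ?_ ?_
      · intro a ha; simp only [Finset.mem_Icc] at *; omega
      · intro a ha; simp only [Finset.mem_Icc] at *; omega
      · intro a ha; simp only [Finset.mem_Icc] at ha; show N - (N - a) = a; omega
      · intro a ha; simp only [Finset.mem_Icc] at ha; show N - (N - a) = a; omega
      · intro a ha
        simp only [Finset.mem_Icc] at ha
        rw [pathGet_rev hNpos x (a - 1) (by omega), pathGet_rev hNpos x a (by omega)]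
        rw [(by omega : N - (N - a) = a), (by omega : N - 1 - (a - 1) = N - a),
            (by omega : N - 1 - a = N - a - 1)]
    have hden : (∏ k ∈ Finset.Icc 2 (N - 1),
          ∑ y, Qs k (pathGet hNpos (fun i => x i.rev) (k - 1)) y)
        = ∏ k ∈ Finset.Icc 2 (N - 1), ∑ y, Qs (N - k) y (pathGet hNpos x (k - 1)) := by
      refine Finset.prod_nbij' (fun k => N + 1 - k) (fun k => N + 1 - k) ?_ ?_ ?_ ?_ ?_
      · intro a ha; simp only [Finset.mem_Icc] at *; omega
      · intro a ha; simp only [Finset.mem_Icc] at *; omega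
      · intro a ha; simp only [Finset.mem_Icc] at ha; show N + 1 - (N + 1 - a) = a; omega
      · intro a ha; simp only [Finset.mem_Icc] at ha; show N + 1 - (N + 1 - a) = a; omega
      · intro a ha
        simp only [Finset.mem_Icc] at ha
        rw [pathGet_rev hNpos x (a - 1) (by omega),
            (by omega : N - 1 - (a - 1) = N - a),
            (by omega : N - (N + 1 - a) = a - 1),
            (by omega : N + 1 - a - 1 = N - a)]
        have h := hcompat (a - 1) (by simp only [Finset.mem_Icc]; omega)
          (pathGet hNpos x (N - a))
        rw [(by omega : a - 1 + 1 = a)] at h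
        exact h.symm
    rw [hnum, hden]
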